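/- arXiv:0912.3701 — 2 statements merged into one kernel-verified Lean document; each statement's English description precedes it below -/
import Mathlib

section
/- (Proposition 3(c)) Let V be a module over H_n(q), let 1 ≤ i ≤ n−1, and let v ∈ V satisfy y_i · v = a v and y_{i+1} · v = b v for scalars a, b ∈ ℂ with a ≠ b. Then the vector v' := σ_i · v + ((q − q^{-1}) b / (a − b)) v satisfies y_i · v' = b v' and y_{i+1} · v' = a v'; that is, v' is a common eigenvector with the eigenvalues of y_i and y_{i+1} interchanged. -/
open FreeAlgebra in
/-- Defining relations of the A-type Hecke algebra `H_n(q)` on generators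
`σ_1, …, σ_{n-1}` (generator `i : Fin (n-1)` represents `σ_{i+1}`). -/
inductive HeckeRel (n : ℕ) (q : ℂ) :
    FreeAlgebra ℂ (Fin (n - 1)) → FreeAlgebra ℂ (Fin (n - 1)) → Prop
  | braid (i j : Fin (n - 1)) (h : (i : ℕ) + 1 = (j : ℕ)) :
      HeckeRel n q (ι ℂ i * ι ℂ j * ι ℂ i) (ι ℂ j * ι ℂ i * ι ℂ j)
  | comm (i j : Fin (n - 1)) (h : (i : ℕ) + 1 < (j : ℕ)) :
      HeckeRel n q (ι ℂ i * ι ℂ j) (ι ℂ j * ι ℂ i)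
  | quad (i : Fin (n - 1)) :
      HeckeRel n q (ι ℂ i * ι ℂ i) (1 + (q - q⁻¹) • ι ℂ i)

/-- The A-type Hecke algebra `H_n(q)`. -/
abbrev HeckeAlgebra (n : ℕ) (q : ℂ) := RingQuot (HeckeRel n q)

/-- The generator `σ_k` (1-based: valid for `1 ≤ k ≤ n-1`; junk value `1` otherwise). -/
noncomputable def heckeGen (n : ℕ) (q : ℂ) (k : ℕ) : HeckeAlgebra n q :=
  if h : k - 1 < n - 1 then RingQuot.mkAlgHom ℂ (HeckeRel n q) (FreeAlgebra.ι ℂ ⟨k - 1, h⟩)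
  else 1

/-- The Jucys–Murphy elements, 1-based: `jm 1 = 1`, `jm (i+1) = σ_i * jm i * σ_i`. -/
noncomputable def jm (n : ℕ) (q : ℂ) : ℕ → HeckeAlgebra n q
  | 0 => 1
  | 1 => 1
  | (i + 2) => heckeGen n q (i + 1) * jm n q (i + 1) * heckeGen n q (i + 1)


/-!
Write `S = σ_i` and `Y = y_i`, so that `y_{i+1} = S Y S` and `S² = 1 + (q - q⁻¹) S`. The
quadratic relation lets one move `S` across `Y` up to a multiple of `v`:
`Y (S v) = b S v - (q - q⁻¹) b v` and `S Y S (S v) = a S v + (q - q⁻¹) b v`. Hence `Y` and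
`S Y S` preserve the plane spanned by `v` and `S v`, acting by triangular matrices with
diagonals `(a, b)` and `(b, a)`; `v'` is the common eigenvector complementary to `v`.
-/

section QuadraticRelation

variable {K V : Type*} [Field K] [AddCommGroup V] [Module K V]
  {S Y : Module.End K V} {c a b : K} {v : V}

theorem apply_apply_of_mul_self_eq (hS : S * S = 1 + c • S) (u : V) :
    S (S u) = u + c • S u := by
  simpa using LinearMap.congr_fun hS u

theorem apply_apply_of_conj_apply_eq (hS : S * S = 1 + c • S) (hvb : (S * Y * S) v = b • v) :
    Y (S v) = b • S v - (c * b) • v := by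
  have hSYS : S (Y (S v)) = b • v := hvb
  have h : b • S v = Y (S v) + (c * b) • v := by
    rw [← map_smul, ← hSYS, apply_apply_of_mul_self_eq hS, hSYS, mul_smul]
  rw [h, add_sub_cancel_right]

theorem conj_apply_apply_eq (hS : S * S = 1 + c • S) (hva : Y v = a • v)
    (hvb : (S * Y * S) v = b • v) :
    (S * Y * S) (S v) = a • S v + (c * b) • v := by
  change S (Y (S (S v))) = _
  rw [apply_apply_of_mul_self_eq hS v, map_add, map_smul, hva,
    apply_apply_of_conj_apply_eq hS hvb, map_add, map_smul, map_smul, map_sub, map_smul, map_smul,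
    apply_apply_of_mul_self_eq hS v]
  match_scalars <;> ring

theorem eigenvector_swap_of_mul_self_eq (hS : S * S = 1 + c • S) (hab : a ≠ b)
    (hva : Y v = a • v) (hvb : (S * Y * S) v = b • v) :
    Y (S v + (c * b / (a - b)) • v) = b • (S v + (c * b / (a - b)) • v) ∧
      (S * Y * S) (S v + (c * b / (a - b)) • v) = a • (S v + (c * b / (a - b)) • v) := by
  have hab' : a - b ≠ 0 := sub_ne_zero.mpr hab
  constructor
  · rw [map_add, map_smul, hva, apply_apply_of_conj_apply_eq hS hvb]
    match_scalars
    · ring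
    · field_simp
      ring
  · rw [map_add, map_smul, conj_apply_apply_eq hS hva hvb, hvb]
    match_scalars
    · ring
    · field_simp
      ring

end QuadraticRelation

theorem heckeGen_mul_self (n : ℕ) (q : ℂ) {k : ℕ} (hk : k - 1 < n - 1) :
    heckeGen n q k * heckeGen n q k = 1 + (q - q⁻¹) • heckeGen n q k := by
  simp only [heckeGen, dif_pos hk]
  rw [← map_mul, ← map_one (RingQuot.mkAlgHom ℂ (HeckeRel n q)), ← map_smul, ← map_add]
  exact RingQuot.mkAlgHom_rel ℂ (HeckeRel.quad ⟨k - 1, hk⟩)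

theorem jm_succ (n : ℕ) (q : ℂ) {i : ℕ} (hi : 1 ≤ i) :
    jm n q (i + 1) = heckeGen n q i * jm n q i * heckeGen n q i := by
  obtain ⟨j, rfl⟩ : ∃ j, i = j + 1 := ⟨i - 1, by omega⟩
  rfl

theorem jm_eigenvector_swap_general (n : ℕ) (q : ℂ)
    (V : Type) [AddCommGroup V] [Module ℂ V]
    (ρ : HeckeAlgebra n q →ₐ[ℂ] Module.End ℂ V) (i : ℕ) (hi1 : 1 ≤ i) (hin : i ≤ n - 1)
    (v : V) (a b : ℂ) (hab : a ≠ b)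
    (hva : ρ (jm n q i) v = a • v) (hvb : ρ (jm n q (i + 1)) v = b • v) :
    ρ (jm n q i) (ρ (heckeGen n q i) v + ((q - q⁻¹) * b / (a - b)) • v) =
        b • (ρ (heckeGen n q i) v + ((q - q⁻¹) * b / (a - b)) • v) ∧
    ρ (jm n q (i + 1)) (ρ (heckeGen n q i) v + ((q - q⁻¹) * b / (a - b)) • v) =
        a • (ρ (heckeGen n q i) v + ((q - q⁻¹) * b / (a - b)) • v) := by
  have hS : ρ (heckeGen n q i) * ρ (heckeGen n q i) = 1 + (q - q⁻¹) • ρ (heckeGen n q i) := by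
    rw [← map_mul, heckeGen_mul_self n q (by omega), map_add, map_one, map_smul]
  rw [jm_succ n q hi1, map_mul, map_mul] at hvb ⊢
  exact eigenvector_swap_of_mul_self_eq hS hab hva hvb

/-- Proposition 3(c): if `v` is a common eigenvector of `y_i`, `y_{i+1}`
with eigenvalues `a ≠ b`, then `v' = σ_i v + ((q − q⁻¹) b / (a − b)) v` is a common
eigenvector with the eigenvalues interchanged. -/
theorem jm_eigenvector_swap (n : ℕ) (q : ℂ) (hn : 1 ≤ n) (hq : q ≠ 0)
    (V : Type) [AddCommGroup V] [Module ℂ V]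
    (ρ : HeckeAlgebra n q →ₐ[ℂ] Module.End ℂ V) (i : ℕ) (hi1 : 1 ≤ i) (hin : i ≤ n - 1)
    (v : V) (a b : ℂ) (hab : a ≠ b)
    (hva : ρ (jm n q i) v = a • v) (hvb : ρ (jm n q (i + 1)) v = b • v) :
    ρ (jm n q i) (ρ (heckeGen n q i) v + ((q - q⁻¹) * b / (a - b)) • v) =
        b • (ρ (heckeGen n q i) v + ((q - q⁻¹) * b / (a - b)) • v) ∧
    ρ (jm n q (i + 1)) (ρ (heckeGen n q i) v + ((q - q⁻¹) * b / (a - b)) • v) =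
        a • (ρ (heckeGen n q i) v + ((q - q⁻¹) * b / (a - b)) • v) :=
  jm_eigenvector_swap_general n q V ρ i hi1 hin v a b hab hva hvb
end

section
/- Let q ∈ ℂ with q ≠ 0 and q² ≠ −1, let V be a module over H_n(q), and let 1 ≤ i ≤ n−2. If a vector v ∈ V satisfies σ_i · v = q v and σ_{i+1} · v = −q^{-1} v, then v = 0; likewise if σ_i · v = −q^{-1} v and σ_{i+1} · v = q v, then v = 0. -/
/-!
Applying the braid relation `σ_i σ_{i+1} σ_i = σ_{i+1} σ_i σ_{i+1}` to a common eigenvector with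
eigenvalues `a` and `b` gives `a b (a - b) • v = 0`. For `a = q`, `b = -q⁻¹` (or the other way
round) the scalar is `±(q + q⁻¹)`, which vanishes only when `q² = -1`.
-/

theorem Module.End.eq_zero_of_braid_of_apply_eq_smul {K V : Type*} [Field K] [AddCommGroup V]
    [Module K V] {A B : Module.End K V} (hbraid : A * B * A = B * A * B) {a b : K}
    (ha : a ≠ 0) (hb : b ≠ 0) (hab : a ≠ b) {v : V} (hA : A v = a • v) (hB : B v = b • v) :
    v = 0 := by
  have hABA : (A * B * A) v = (a * b * a) • v := by
    simp only [Module.End.mul_apply, hA, hB, map_smul, smul_smul]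
    ring_nf
  have hBAB : (B * A * B) v = (b * a * b) • v := by
    simp only [Module.End.mul_apply, hA, hB, map_smul, smul_smul]
    ring_nf
  have hzero : (a * b * (a - b)) • v = 0 := by
    rw [show a * b * (a - b) = a * b * a - b * a * b by ring, sub_smul, ← hABA, ← hBAB, hbraid,
      sub_self]
  exact (smul_eq_zero.mp hzero).resolve_left (mul_ne_zero (mul_ne_zero ha hb) (sub_ne_zero.2 hab))

theorem heckeGen_eq_mkAlgHom {n : ℕ} {q : ℂ} {k : ℕ} (hk : k - 1 < n - 1) :
    heckeGen n q k = RingQuot.mkAlgHom ℂ (HeckeRel n q) (FreeAlgebra.ι ℂ ⟨k - 1, hk⟩) :=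
  dif_pos hk

theorem heckeGen_braid {n : ℕ} {q : ℂ} {i : ℕ} (hi1 : 1 ≤ i) (hin : i ≤ n - 2) :
    heckeGen n q i * heckeGen n q (i + 1) * heckeGen n q i =
      heckeGen n q (i + 1) * heckeGen n q i * heckeGen n q (i + 1) := by
  have hi : i - 1 < n - 1 := by omega
  have hi' : i + 1 - 1 < n - 1 := by omega
  simp only [heckeGen_eq_mkAlgHom hi, heckeGen_eq_mkAlgHom hi', ← map_mul]
  exact RingQuot.mkAlgHom_rel ℂ (HeckeRel.braid _ _ (by simp only; omega))

theorem ne_neg_inv_of_sq_ne_neg_one {q : ℂ} (hq : q ≠ 0) (hq2 : q ^ 2 ≠ -1) : q ≠ -q⁻¹ := by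
  intro h
  apply hq2
  calc q ^ 2 = q * -q⁻¹ := by rw [sq, ← h]
    _ = -1 := by rw [mul_neg, mul_inv_cancel₀ hq]

theorem no_mixed_eigenvector_general (n : ℕ) (q : ℂ) (hq : q ≠ 0) (hq2 : q ^ 2 ≠ -1)
    (V : Type) [AddCommGroup V] [Module ℂ V]
    (ρ : HeckeAlgebra n q →ₐ[ℂ] Module.End ℂ V) (i : ℕ) (hi1 : 1 ≤ i) (hin : i ≤ n - 2)
    (v : V) :
    ((ρ (heckeGen n q i) v = q • v ∧ ρ (heckeGen n q (i + 1)) v = (-q⁻¹) • v) → v = 0) ∧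
    ((ρ (heckeGen n q i) v = (-q⁻¹) • v ∧ ρ (heckeGen n q (i + 1)) v = q • v) → v = 0) := by
  have hbraid : ρ (heckeGen n q i) * ρ (heckeGen n q (i + 1)) * ρ (heckeGen n q i) =
      ρ (heckeGen n q (i + 1)) * ρ (heckeGen n q i) * ρ (heckeGen n q (i + 1)) := by
    simp only [← map_mul, heckeGen_braid hi1 hin]
  have hq' : -q⁻¹ ≠ 0 := neg_ne_zero.2 (inv_ne_zero hq)
  have hne : q ≠ -q⁻¹ := ne_neg_inv_of_sq_ne_neg_one hq hq2
  refine ⟨fun ⟨hσ, hσ'⟩ => ?_, fun ⟨hσ, hσ'⟩ => ?_⟩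
  · exact Module.End.eq_zero_of_braid_of_apply_eq_smul hbraid hq hq' hne hσ hσ'
  · exact Module.End.eq_zero_of_braid_of_apply_eq_smul hbraid hq' hq hne.symm hσ hσ'

/-- no nonzero vector can be simultaneously a `q`-eigenvector of `σ_i`
and a `(−q⁻¹)`-eigenvector of `σ_{i+1}` (or vice versa), provided `q² ≠ −1`. -/
theorem no_mixed_eigenvector (n : ℕ) (q : ℂ) (hq : q ≠ 0) (hq2 : q ^ 2 ≠ -1)
    (hn : 1 ≤ n)
    (V : Type) [AddCommGroup V] [Module ℂ V]
    (ρ : HeckeAlgebra n q →ₐ[ℂ] Module.End ℂ V) (i : ℕ) (hi1 : 1 ≤ i) (hin : i ≤ n - 2)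
    (v : V) :
    ((ρ (heckeGen n q i) v = q • v ∧ ρ (heckeGen n q (i + 1)) v = (-q⁻¹) • v) → v = 0) ∧
    ((ρ (heckeGen n q i) v = (-q⁻¹) • v ∧ ρ (heckeGen n q (i + 1)) v = q • v) → v = 0) :=
  no_mixed_eigenvector_general n q hq hq2 V ρ i hi1 hin v
end
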